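/- arXiv:0904.2937 — 3 statements merged into one kernel-verified Lean document; each statement's English description precedes it below -/
import Mathlib

section
/- Let K be an algebraically closed field of characteristic 0, and let q = X₀² + X₁² + X₂² in the polynomial ring K[X₀, X₁, X₂]. Then the quotient K-algebras K[X₀, X₁, X₂]/(q) and K[X₀, X₁, X₂]/(q − 1) are not isomorphic as K-algebras. -/
/-!
A surjection of `K`-algebras `A → K ⊕ V` onto a trivial square-zero extension picks a
`K`-point of `Spec A` whose Zariski tangent space has dimension at least `dim V`.
Sending `Xᵢ ↦ eᵢ ∈ V = K³` kills `q`, which has no linear part, so the cone surjects onto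
`K ⊕ K³`. For the smooth quadric, if `F` is such a surjection and `F Xᵢ = (aᵢ, vᵢ)`, the `vᵢ`
span `K³` and so form a basis; but `F q = 1` gives `∑ aᵢ² = 1` and `2 ∑ aᵢ vᵢ = 0`, whence all
`aᵢ = 0`, a contradiction.
-/

open MvPolynomial TrivSqZeroExt

section SquareZero

variable {K : Type*} [Field K] {σ : Type*} {V : Type*} [AddCommGroup V] [Module K V] [Module Kᵐᵒᵖ V] [IsCentralScalar K V]

theorem snd_mem_span_snd_X (F : MvPolynomial σ K →ₐ[K] TrivSqZeroExt K V)
    (p : MvPolynomial σ K) :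
    (F p).snd ∈ Submodule.span K (Set.range fun i => (F (X i)).snd) := by
  induction p using MvPolynomial.induction_on with
  | C a => simp [algebraMap_eq_inl]
  | add p r hp hr => simpa using Submodule.add_mem _ hp hr
  | mul_X p i hp =>
    rw [map_mul, snd_mul, op_smul_eq_smul]
    exact Submodule.add_mem _ (Submodule.smul_mem _ _ (Submodule.subset_span ⟨i, rfl⟩))
      (Submodule.smul_mem _ _ hp)

theorem linearIndependent_snd_X_of_surjective [Fintype σ] [FiniteDimensional K V]
    (hcard : Fintype.card σ = Module.finrank K V)
    {F : MvPolynomial σ K →ₐ[K] TrivSqZeroExt K V} (hF : Function.Surjective F) :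
    LinearIndependent K fun i => (F (X i)).snd := by
  refine linearIndependent_of_top_le_span_of_card_eq_finrank (fun v _ => ?_) hcard
  obtain ⟨p, hp⟩ := hF (inr v)
  simpa [hp] using snd_mem_span_snd_X F p

theorem sum_fst_X_sq_eq_one [Fintype σ]
    {F : MvPolynomial σ K →ₐ[K] TrivSqZeroExt K V} (hF : F (∑ i, X i ^ 2) = 1) :
    ∑ i, (F (X i)).fst ^ 2 = 1 := by
  simpa [fst_sum, fst_pow] using congrArg fst hF

theorem sum_fst_smul_snd_X_eq_zero [Fintype σ] [NeZero (2 : K)]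
    {F : MvPolynomial σ K →ₐ[K] TrivSqZeroExt K V} (hF : F (∑ i, X i ^ 2) = 1) :
    ∑ i, (F (X i)).fst • (F (X i)).snd = 0 := by
  have h := congrArg snd hF
  simp only [map_sum, map_pow, snd_sum, snd_pow, snd_one, Nat.pred_succ, pow_one,
    ← Finset.smul_sum, ← Nat.cast_smul_eq_nsmul K, Nat.cast_ofNat] at h
  exact (smul_eq_zero.mp h).resolve_left two_ne_zero

theorem not_surjective_of_map_sum_X_sq_eq_one [Fintype σ] [FiniteDimensional K V]
    [NeZero (2 : K)] (hcard : Fintype.card σ = Module.finrank K V)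
    {F : MvPolynomial σ K →ₐ[K] TrivSqZeroExt K V} (hF : F (∑ i, X i ^ 2) = 1) :
    ¬ Function.Surjective F := by
  intro hsurj
  have hfst := sum_fst_X_sq_eq_one hF
  have hzero := Fintype.linearIndependent_iff.mp
    (linearIndependent_snd_X_of_surjective hcard hsurj) _ (sum_fst_smul_snd_X_eq_zero hF)
  simp [hzero] at hfst

theorem not_surjective_quotient_sum_X_sq_sub_one [Fintype σ] [FiniteDimensional K V]
    [NeZero (2 : K)] (hcard : Fintype.card σ = Module.finrank K V)
    (f : (MvPolynomial σ K ⧸ Ideal.span {∑ i, (X i : MvPolynomial σ K) ^ 2 - 1}) →ₐ[K]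
      TrivSqZeroExt K V) :
    ¬ Function.Surjective f := by
  intro hf
  have hone : Ideal.Quotient.mk (Ideal.span {∑ i, (X i : MvPolynomial σ K) ^ 2 - 1})
      (∑ i, X i ^ 2) = 1 := by
    rw [← map_one (Ideal.Quotient.mk _), Ideal.Quotient.eq]
    exact Ideal.subset_span rfl
  refine not_surjective_of_map_sum_X_sq_eq_one (F := f.comp (Ideal.Quotient.mkₐ K _)) hcard
    ?_ (hf.comp Ideal.Quotient.mk_surjective)
  rw [AlgHom.comp_apply, Ideal.Quotient.mkₐ_eq_mk, hone, map_one]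

end SquareZero

section Cone

variable {K : Type*} [Field K] {σ : Type*} [Fintype σ]

theorem aeval_inr_single_surjective [DecidableEq σ] :
    Function.Surjective
      (aeval fun i => inr (Pi.single i 1) : MvPolynomial σ K →ₐ[K] TrivSqZeroExt K (σ → K)) := by
  intro x
  refine ⟨C x.fst + ∑ i, C (x.snd i) * X i, ?_⟩
  ext <;> simp [algebraMap_eq_inl, fst_sum, snd_sum, inl_mul_inr, Pi.single_apply]

theorem aeval_inr_single_sum_X_sq [DecidableEq σ] :
    aeval (fun i => inr (Pi.single i 1) : σ → TrivSqZeroExt K (σ → K))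
      (∑ i, (X i : MvPolynomial σ K) ^ 2) = 0 := by
  simp [sq, inr_mul_inr]

theorem exists_surjective_quotient_sum_X_sq :
    ∃ f : (MvPolynomial σ K ⧸ Ideal.span {∑ i, (X i : MvPolynomial σ K) ^ 2}) →ₐ[K]
      TrivSqZeroExt K (σ → K), Function.Surjective f := by
  classical
  refine ⟨Ideal.Quotient.liftₐ _ (aeval fun i => inr (Pi.single i 1)) fun a ha => ?_,
    Ideal.Quotient.lift_surjective_of_surjective _ _ aeval_inr_single_surjective⟩
  obtain ⟨b, rfl⟩ := Ideal.mem_span_singleton'.mp ha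
  rw [map_mul, aeval_inr_single_sum_X_sq, mul_zero]

end Cone

theorem quadric_cone_not_iso_smooth_quadric_general
    (K : Type*) [Field K] [CharZero K]
    (q : MvPolynomial (Fin 3) K)
    (hq : q = X 0 ^ 2 + X 1 ^ 2 + X 2 ^ 2) :
    ¬ Nonempty
      ((MvPolynomial (Fin 3) K ⧸ Ideal.span {q}) ≃ₐ[K]
        (MvPolynomial (Fin 3) K ⧸ Ideal.span {q - 1})) := by
  rintro ⟨e⟩
  obtain rfl : q = ∑ i, X i ^ 2 := by rw [hq, Fin.sum_univ_three]
  obtain ⟨f, hf⟩ := exists_surjective_quotient_sum_X_sq (K := K) (σ := Fin 3)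
  have hcard : Fintype.card (Fin 3) = Module.finrank K (Fin 3 → K) := by simp
  exact not_surjective_quotient_sum_X_sq_sub_one hcard (f.comp e.symm.toAlgHom)
    (hf.comp e.symm.surjective)

/-- Over an algebraically closed field `K` of characteristic 0, with
`q = X₀² + X₁² + X₂²` in `K[X₀, X₁, X₂]`, the quotient algebras `K[X₀,X₁,X₂]/(q)` and
`K[X₀,X₁,X₂]/(q - 1)` are not isomorphic as `K`-algebras. -/
theorem quadric_cone_not_iso_smooth_quadric
    (K : Type*) [Field K] [IsAlgClosed K] [CharZero K]
    (q : MvPolynomial (Fin 3) K)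
    (hq : q = X 0 ^ 2 + X 1 ^ 2 + X 2 ^ 2) :
    ¬ Nonempty
      ((MvPolynomial (Fin 3) K ⧸ Ideal.span {q}) ≃ₐ[K]
        (MvPolynomial (Fin 3) K ⧸ Ideal.span {q - 1})) :=
  quadric_cone_not_iso_smooth_quadric_general K q hq
end

section
/- Let K be an algebraically closed field of characteristic 0 and Λ a finitely generated free abelian group. Let A and B be commutative K-algebras which are integral domains, each Λ-graded with all graded components of K-dimension at most 1. If the support monoids coincide, i.e. { λ ∈ Λ : A_λ ≠ 0 } = { λ ∈ Λ : B_λ ≠ 0 }, then A and B are isomorphic as Λ-graded K-algebras (in particular, there is a K-algebra isomorphism A ≅ B mapping each A_λ onto B_λ). -/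
/-!
Choose a nonzero `a i ∈ 𝒜 i` for every `i` in the support `S`. If the choice is multiplicative,
`a i * a j = a (i + j)`, then `A` is the monoid algebra `K[S]` with basis `(a i)`, so `a i ↦ b i`
is a graded isomorphism. A multiplicative choice exists: the nonzero homogeneous fractions
`x / y ∈ Frac A`, paired with their degrees, form a group whose projection to `Λ` splits over its
image, a subgroup of a finitely generated free abelian group and hence free. Multiplicity freeness
forces the value of the splitting at `i ∈ S` to lie in `𝒜 i`.
-/

namespace Submodule

section SpanSingleton

variable (R : Type*) {M N : Type*} [Ring R] [IsDomain R] [AddCommGroup M] [Module R M]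
  [Module.IsTorsionFree R M] [AddCommGroup N] [Module R N] [Module.IsTorsionFree R N]

open Classical in
noncomputable def spanSingletonEquiv (x : M) (y : N) (h : x = 0 ↔ y = 0) :
    (R ∙ x) ≃ₗ[R] (R ∙ y) :=
  if hx : x = 0 then
    haveI : Subsingleton (R ∙ x) := by rw [hx, span_zero_singleton]; infer_instance
    haveI : Subsingleton (R ∙ y) := by rw [h.mp hx, span_zero_singleton]; infer_instance
    LinearEquiv.ofSubsingleton _ _
  else
    (LinearEquiv.toSpanNonzeroSingleton R M x hx).symm.trans
      (LinearEquiv.toSpanNonzeroSingleton R N y (mt h.mpr hx))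

theorem spanSingletonEquiv_apply_self (x : M) (y : N) (h : x = 0 ↔ y = 0) :
    spanSingletonEquiv R x y h ⟨x, mem_span_singleton_self x⟩ =
      ⟨y, mem_span_singleton_self y⟩ := by
  unfold spanSingletonEquiv
  split_ifs with hx
  · ext; simp [h.mp hx]
  · rw [LinearEquiv.trans_apply, (LinearEquiv.symm_apply_eq _).mpr
      (LinearEquiv.toSpanNonzeroSingleton_one R M x hx).symm,
      LinearEquiv.toSpanNonzeroSingleton_one]

end SpanSingleton

theorem eq_span_singleton_of_rank_le_one {K V : Type*} [DivisionRing K]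
    [AddCommGroup V] [Module K V] {W : Submodule K V} (hW : Module.rank K W ≤ 1) {z : V}
    (hz : z ∈ W) (hz0 : z ≠ 0) : W = K ∙ z := by
  obtain ⟨g, rfl⟩ := ((W.rank_le_one_iff_isPrincipal).mp hW).principal
  obtain ⟨c, rfl⟩ := mem_span_singleton.mp hz
  rw [span_singleton_smul_eq (IsUnit.mk0 c (by rintro rfl; simp at hz0))]

theorem exists_linearMap_prod_mem {R X Λ : Type*} [CommRing R] [IsDomain R]
    [IsPrincipalIdealRing R] [AddCommGroup X] [Module R X] [AddCommGroup Λ] [Module R Λ]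
    [Module.Free R Λ] [Module.Finite R Λ] (H : Submodule R (X × Λ)) :
    ∃ σ : H.map (LinearMap.snd R X Λ) →ₗ[R] X, ∀ z, (σ z, (z : Λ)) ∈ H := by
  obtain ⟨s, hs⟩ := Module.projective_lifting_property ((LinearMap.snd R X Λ).submoduleMap H)
    LinearMap.id (LinearMap.submoduleMap_surjective _ _)
  refine ⟨LinearMap.fst R X Λ ∘ₗ H.subtype ∘ₗ s, fun z => ?_⟩
  have hsnd : (s z : X × Λ).2 = z := congrArg Subtype.val (LinearMap.congr_fun hs z)
  convert (s z).2 using 1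
  exact Prod.ext rfl hsnd.symm

end Submodule

theorem LinearMap.map_mul_of_span_eq_top {R A B : Type*} [CommSemiring R] [Semiring A]
    [Algebra R A] [Semiring B] [Algebra R B] (f : A →ₗ[R] B) {s : Set A}
    (hs : Submodule.span R s = ⊤) (h : ∀ x ∈ s, ∀ y ∈ s, f (x * y) = f x * f y)
    (x y : A) : f (x * y) = f x * f y := by
  have : (LinearMap.mul R B).compl₁₂ f f = (LinearMap.mul R A).compr₂ f :=
    ext_on hs fun x hx => ext_on hs fun y hy => (h x hx y hy).symm
  exact (congr_fun₂ this x y).symm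

namespace DirectSum.Decomposition

variable {ι R M N : Type*} [DecidableEq ι] [Semiring R] [AddCommMonoid M] [Module R M]
  [AddCommMonoid N] [Module R N] {𝒜 : ι → Submodule R M} {ℬ : ι → Submodule R N}
  [Decomposition 𝒜] [Decomposition ℬ]

noncomputable def linearEquivCongr (e : ∀ i, 𝒜 i ≃ₗ[R] ℬ i) : M ≃ₗ[R] N :=
  (decomposeLinearEquiv 𝒜).trans ((DFinsupp.mapRange.linearEquiv e).trans
    (decomposeLinearEquiv ℬ).symm)

theorem linearEquivCongr_apply_of_mem (e : ∀ i, 𝒜 i ≃ₗ[R] ℬ i)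
    {i : ι} {x : M} (hx : x ∈ 𝒜 i) : linearEquivCongr e x = e i ⟨x, hx⟩ := by
  simp only [linearEquivCongr, LinearEquiv.trans_apply, decomposeLinearEquiv_apply,
    decompose_of_mem 𝒜 hx]
  have hof : DFinsupp.mapRange.linearEquiv e (of _ i ⟨x, hx⟩) = of _ i (e i ⟨x, hx⟩) :=
    lmap_of (fun i => (e i).toLinearMap) i _
  rw [hof, decomposeLinearEquiv_symm_apply, decompose_symm_of]

theorem map_linearEquivCongr (e : ∀ i, 𝒜 i ≃ₗ[R] ℬ i) (i : ι) :
    (𝒜 i).map (linearEquivCongr e).toLinearMap = ℬ i := by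
  refine le_antisymm ?_ fun y hy => ⟨(e i).symm ⟨y, hy⟩, ((e i).symm ⟨y, hy⟩).2, ?_⟩
  · rintro _ ⟨x, hx, rfl⟩
    simp [linearEquivCongr_apply_of_mem e hx]
  · simp [linearEquivCongr_apply_of_mem e ((e i).symm ⟨y, hy⟩).2]

end DirectSum.Decomposition

section MulBasis

variable {K Λ A : Type*} [Field K] [AddCommGroup Λ] [Ring A] [Algebra K A]
  {𝒜 : Λ → Submodule K A} {a : Λ → A}

structure IsHomogeneousMulBasis (𝒜 : Λ → Submodule K A) (a : Λ → A) : Prop where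
  map_zero : a 0 = 1
  span_eq : ∀ i, 𝒜 i = K ∙ a i
  map_add : ∀ i j, a i ≠ 0 → a j ≠ 0 → a (i + j) = a i * a j

namespace IsHomogeneousMulBasis

theorem mem (ha : IsHomogeneousMulBasis 𝒜 a) (i : Λ) : a i ∈ 𝒜 i :=
  ha.span_eq i ▸ Submodule.mem_span_singleton_self _

theorem eq_zero_iff (ha : IsHomogeneousMulBasis 𝒜 a) (i : Λ) : a i = 0 ↔ 𝒜 i = ⊥ := by
  rw [ha.span_eq, Submodule.span_singleton_eq_bot]

theorem span_range_eq_top [DecidableEq Λ] [DirectSum.Decomposition 𝒜]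
    (ha : IsHomogeneousMulBasis 𝒜 a) : Submodule.span K (Set.range a) = ⊤ := by
  rw [Submodule.span_range_eq_iSup,
    ← (DirectSum.Decomposition.isInternal 𝒜).submodule_iSup_eq_top]
  exact iSup_congr fun i => (ha.span_eq i).symm

theorem exists_algEquiv [DecidableEq Λ] {B : Type*} [Ring B] [Algebra K B]
    {ℬ : Λ → Submodule K B} [DirectSum.Decomposition 𝒜] [DirectSum.Decomposition ℬ]
    {b : Λ → B}
    (ha : IsHomogeneousMulBasis 𝒜 a) (hb : IsHomogeneousMulBasis ℬ b)
    (hab : ∀ i, a i = 0 ↔ b i = 0) :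
    ∃ e : A ≃ₐ[K] B, ∀ i, (𝒜 i).map e.toLinearMap = ℬ i := by
  let e i : 𝒜 i ≃ₗ[K] ℬ i := (LinearEquiv.ofEq _ _ (ha.span_eq i)).trans
    ((Submodule.spanSingletonEquiv K (a i) (b i) (hab i)).trans
      (LinearEquiv.ofEq _ _ (hb.span_eq i).symm))
  let f := DirectSum.Decomposition.linearEquivCongr e
  have hf i : f (a i) = b i := by
    rw [DirectSum.Decomposition.linearEquivCongr_apply_of_mem e (ha.mem i)]
    change ((Submodule.spanSingletonEquiv K (a i) (b i) (hab i))
      ⟨a i, Submodule.mem_span_singleton_self _⟩ : B) = b i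
    rw [Submodule.spanSingletonEquiv_apply_self]
  have hmul : ∀ x y, f (x * y) = f x * f y := by
    refine f.toLinearMap.map_mul_of_span_eq_top ha.span_range_eq_top ?_
    rintro _ ⟨i, rfl⟩ _ ⟨j, rfl⟩
    by_cases hi : a i = 0
    · simp [hi]
    by_cases hj : a j = 0
    · simp [hj]
    simp only [LinearEquiv.coe_coe]
    rw [← ha.map_add i j hi hj, hf, hf, hf,
      hb.map_add i j (mt (hab i).mpr hi) (mt (hab j).mpr hj)]
  exact ⟨AlgEquiv.ofLinearEquiv f (by rw [← ha.map_zero, hf, hb.map_zero]) hmul,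
    DirectSum.Decomposition.map_linearEquivCongr e⟩

end IsHomogeneousMulBasis

end MulBasis

section HomogeneousFractions

variable {K Λ A : Type*} [Field K] [AddCommGroup Λ] [CommRing A] [IsDomain A] [Algebra K A]
  (𝒜 : Λ → Submodule K A) [SetLike.GradedMonoid 𝒜]

def homogeneousFractions : AddSubgroup (Additive (FractionRing A)ˣ × Λ) where
  carrier := {p | ∃ (i j : Λ) (x y : A), x ∈ 𝒜 i ∧ y ∈ 𝒜 j ∧ y ≠ 0 ∧
    (p.1.toMul : FractionRing A) * algebraMap A _ y = algebraMap A _ x ∧ p.2 = i - j}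
  zero_mem' := ⟨0, 0, 1, 1, SetLike.one_mem_graded 𝒜, SetLike.one_mem_graded 𝒜, one_ne_zero,
    by simp, by simp⟩
  add_mem' := by
    rintro p q ⟨i, j, x, y, hx, hy, hy0, hxy, hp⟩ ⟨i', j', x', y', hx', hy', hy0', hxy', hq⟩
    refine ⟨i + i', j + j', x * x', y * y', SetLike.mul_mem_graded hx hx',
      SetLike.mul_mem_graded hy hy', mul_ne_zero hy0 hy0', ?_, ?_⟩
    · simp only [Prod.fst_add, toMul_add, Units.val_mul, map_mul, ← hxy, ← hxy']
      ring
    · simp only [Prod.snd_add, hp, hq]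
      abel
  neg_mem' := by
    rintro p ⟨i, j, x, y, hx, hy, hy0, hxy, hp⟩
    have hx0 : x ≠ 0 := by
      rintro rfl
      simp [hy0] at hxy
    refine ⟨j, i, y, x, hy, hx, hx0, ?_, by simp [hp]⟩
    simp only [Prod.fst_neg, toMul_neg, Units.val_inv_eq_inv_val, ← hxy]
    exact inv_mul_cancel_left₀ (Units.ne_zero _) _

variable {𝒜}

theorem mem_map_snd_homogeneousFractions {i : Λ} (hi : 𝒜 i ≠ ⊥) :
    i ∈ (homogeneousFractions 𝒜).toIntSubmodule.map
      (LinearMap.snd ℤ (Additive (FractionRing A)ˣ) Λ) := by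
  obtain ⟨x, hx, hx0⟩ := Submodule.exists_mem_ne_zero_of_ne_bot hi
  have hx0' : algebraMap A (FractionRing A) x ≠ 0 :=
    (map_ne_zero_iff _ (IsFractionRing.injective A _)).mpr hx0
  exact ⟨(Additive.ofMul (Units.mk0 _ hx0'), i),
    ⟨i, 0, x, 1, hx, SetLike.one_mem_graded 𝒜, one_ne_zero, by simp, by simp⟩, rfl⟩

theorem exists_mem_algebraMap_eq_of_mem_homogeneousFractions
    (hmf : ∀ i, Module.rank K (𝒜 i) ≤ 1) {p : Additive (FractionRing A)ˣ × Λ}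
    (hp : p ∈ homogeneousFractions 𝒜) (hne : 𝒜 p.2 ≠ ⊥) :
    ∃ c ∈ 𝒜 p.2, algebraMap A (FractionRing A) c = p.1.toMul := by
  obtain ⟨i, j, x, y, hx, hy, hy0, hxy, hp⟩ := hp
  obtain ⟨z, hz, hz0⟩ := Submodule.exists_mem_ne_zero_of_ne_bot hne
  have hzy : z * y ∈ 𝒜 i := by
    simpa [hp] using SetLike.mul_mem_graded hz hy
  rw [Submodule.eq_span_singleton_of_rank_le_one (hmf i) hzy (mul_ne_zero hz0 hy0)] at hx
  obtain ⟨k, hk⟩ := Submodule.mem_span_singleton.mp hx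
  refine ⟨k • z, Submodule.smul_mem _ k hz, mul_right_cancel₀
    ((map_ne_zero_iff _ (IsFractionRing.injective A _)).mpr hy0) ?_⟩
  rw [← map_mul, smul_mul_assoc, hk, hxy]

theorem exists_isHomogeneousMulBasis [Module.Free ℤ Λ] [Module.Finite ℤ Λ]
    (hmf : ∀ i, Module.rank K (𝒜 i) ≤ 1) : ∃ a, IsHomogeneousMulBasis 𝒜 a := by
  classical
  obtain ⟨σ, hσ⟩ := (homogeneousFractions 𝒜).toIntSubmodule.exists_linearMap_prod_mem
  have key i (hi : 𝒜 i ≠ ⊥) : ∃ c ∈ 𝒜 i, algebraMap A (FractionRing A) c =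
      (σ ⟨i, mem_map_snd_homogeneousFractions hi⟩).toMul :=
    exists_mem_algebraMap_eq_of_mem_homogeneousFractions hmf (hσ ⟨i, _⟩) hi
  choose c hc hcσ using key
  have hc0 i hi : c i hi ≠ 0 := fun h => Units.ne_zero _ (by rw [← hcσ, h, map_zero])
  have hι := IsFractionRing.injective A (FractionRing A)
  let a i := if hi : 𝒜 i = ⊥ then 0 else c i hi
  have ha i (hi : 𝒜 i ≠ ⊥) : a i = c i hi := dif_neg hi
  have ha_ne_bot i (h : a i ≠ 0) : 𝒜 i ≠ ⊥ := fun hi => h (dif_pos hi)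
  refine ⟨a, ⟨?_, fun i => ?_, fun i j hi hj => ?_⟩⟩
  · have h0 : 𝒜 0 ≠ ⊥ :=
      (Submodule.ne_bot_iff _).mpr ⟨1, SetLike.one_mem_graded 𝒜, one_ne_zero⟩
    apply hι
    rw [map_one, ha 0 h0, hcσ, show σ ⟨0, _⟩ = 0 from σ.map_zero]
    rfl
  · by_cases hi : 𝒜 i = ⊥
    · rw [hi, show a i = 0 from dif_pos hi, Submodule.span_zero_singleton]
    · rw [ha i hi]
      exact Submodule.eq_span_singleton_of_rank_le_one (hmf i) (hc i hi) (hc0 i hi)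
  · have hi' := ha_ne_bot i hi
    have hj' := ha_ne_bot j hj
    have hij : 𝒜 (i + j) ≠ ⊥ := (Submodule.ne_bot_iff _).mpr ⟨c i hi' * c j hj',
      SetLike.mul_mem_graded (hc i hi') (hc j hj'), mul_ne_zero (hc0 i hi') (hc0 j hj')⟩
    apply hι
    rw [ha _ hij, ha i hi', ha j hj', map_mul, hcσ, hcσ, hcσ,
      show σ ⟨i + j, _⟩ = σ ⟨i, _⟩ + σ ⟨j, _⟩ from σ.map_add ⟨i, _⟩ ⟨j, _⟩]
    rfl

end HomogeneousFractions

theorem graded_multiplicityFree_domains_iso_of_eq_support_general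
    (K Λ A B : Type*) [Field K]
    [AddCommGroup Λ] [DecidableEq Λ] [Module.Free ℤ Λ] [Module.Finite ℤ Λ]
    [CommRing A] [IsDomain A] [Algebra K A]
    [CommRing B] [IsDomain B] [Algebra K B]
    (𝒜 : Λ → Submodule K A) [GradedAlgebra 𝒜]
    (ℬ : Λ → Submodule K B) [GradedAlgebra ℬ]
    (hmfA : ∀ lam : Λ, Module.rank K (𝒜 lam) ≤ 1)
    (hmfB : ∀ lam : Λ, Module.rank K (ℬ lam) ≤ 1)
    (hsupp : {lam : Λ | 𝒜 lam ≠ ⊥} = {lam : Λ | ℬ lam ≠ ⊥}) :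
    ∃ e : A ≃ₐ[K] B, ∀ lam : Λ, (𝒜 lam).map e.toLinearMap = ℬ lam := by
  obtain ⟨a, ha⟩ := exists_isHomogeneousMulBasis hmfA
  obtain ⟨b, hb⟩ := exists_isHomogeneousMulBasis hmfB
  refine ha.exists_algEquiv hb fun i => ?_
  rw [ha.eq_zero_iff, hb.eq_zero_iff]
  exact not_iff_not.mp (Set.ext_iff.mp hsupp i)

/-- Let `K` be an algebraically closed field of characteristic 0, `Λ` a
finitely generated free abelian group, and `A`, `B` two `Λ`-graded commutative integral
`K`-algebras whose gradings are multiplicity free (every graded piece has dimension ≤ 1).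
If the support monoids coincide, `{λ | 𝒜 λ ≠ 0} = {λ | ℬ λ ≠ 0}`, then `A` and `B` are
isomorphic as `Λ`-graded `K`-algebras: there is a `K`-algebra isomorphism `A ≃ B`
mapping each `𝒜 λ` onto `ℬ λ`. -/
theorem graded_multiplicityFree_domains_iso_of_eq_support
    (K Λ A B : Type*) [Field K] [IsAlgClosed K] [CharZero K]
    [AddCommGroup Λ] [DecidableEq Λ] [Module.Free ℤ Λ] [Module.Finite ℤ Λ]
    [CommRing A] [IsDomain A] [Algebra K A]
    [CommRing B] [IsDomain B] [Algebra K B]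
    (𝒜 : Λ → Submodule K A) [GradedAlgebra 𝒜]
    (ℬ : Λ → Submodule K B) [GradedAlgebra ℬ]
    (hmfA : ∀ lam : Λ, Module.rank K (𝒜 lam) ≤ 1)
    (hmfB : ∀ lam : Λ, Module.rank K (ℬ lam) ≤ 1)
    (hsupp : {lam : Λ | 𝒜 lam ≠ ⊥} = {lam : Λ | ℬ lam ≠ ⊥}) :
    ∃ e : A ≃ₐ[K] B, ∀ lam : Λ, (𝒜 lam).map e.toLinearMap = ℬ lam :=
  graded_multiplicityFree_domains_iso_of_eq_support_general K Λ A B 𝒜 ℬ hmfA hmfB hsupp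
end

section
/- Let R be a commutative integral domain and let I be a nonzero ideal of R which is invertible, i.e. I is a unit when regarded as a fractional ideal of R in its field of fractions. Then the open subset of the prime spectrum Spec R given by the complement of the zero locus of I (that is, { p ∈ Spec R : I ⊄ p }) is an affine open subset of the scheme Spec R. -/
/-!
If `I` is invertible, then `1 = ∑ rᵢ bᵢ` with `rᵢ ∈ I` and `bᵢ ∈ I⁻¹`. Every `bᵢ` is regular on
`U = Spec R ∖ V(I)`: near a point outside `V(I)` it is `(bᵢ r) / r` for some `r ∈ I` not vanishing
there. So the `bᵢ` are sections over `U`, the `rᵢ` generate the unit ideal of `Γ(U)`, and `U` is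
covered by the affine basic opens `D(rᵢ)`; hence `U` is affine.
-/

open AlgebraicGeometry CategoryTheory

theorem Submodule.exists_fin_sum_mul_eq_of_mem_mul {R A : Type*} [CommSemiring R] [Semiring A]
    [Algebra R A] {M N : Submodule R A} {x : A} (hx : x ∈ M * N) :
    ∃ (n : ℕ) (m p : Fin n → A), (∀ i, m i ∈ M) ∧ (∀ i, p i ∈ N) ∧ ∑ i, m i * p i = x := by
  rw [mul_eq_span_mul_set, mem_span_set'] at hx
  obtain ⟨n, c, g, rfl⟩ := hx
  choose m hm p hp hmp using fun i => Set.mem_mul.mp (g i).2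
  exact ⟨n, fun i => c i • m i, p, fun i => M.smul_mem _ (hm i), hp,
    by simp only [smul_mul_assoc, hmp]⟩

theorem FractionalIdeal.exists_sum_mul_eq_one_of_isUnit {R K : Type*} [CommRing R] [CommRing K]
    [Algebra R K] {S : Submonoid R} {I : Ideal R} (hI : IsUnit (I : FractionalIdeal S K)) :
    ∃ (n : ℕ) (r : Fin n → R) (b : Fin n → K), (∀ i, r i ∈ I) ∧
      (∀ i, ∀ x ∈ I, algebraMap R K x * b i ∈ (1 : Submodule R K)) ∧
      ∑ i, algebraMap R K (r i) * b i = 1 := by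
  obtain ⟨J, hIJ⟩ := isUnit_iff_exists_inv.mp hI
  have hIJ' : ((I : FractionalIdeal S K) : Submodule R K) * J = 1 := by
    rw [← coe_mul, hIJ, coe_one]
  obtain ⟨n, a, b, ha, hb, hsum⟩ :=
    Submodule.exists_fin_sum_mul_eq_of_mem_mul (hIJ' ▸ Submodule.one_le.mp le_rfl)
  choose r hr hra using fun i => (mem_coeIdeal S).mp (ha i)
  refine ⟨n, r, b, hr, fun i x hx => hIJ' ▸ Submodule.mul_mem_mul ?_ (hb i), ?_⟩
  · exact mem_coeIdeal_of_mem S hx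
  · simpa only [hra] using hsum

theorem LocalizedModule.algebraMap_mul_mk_eq_algebraMap {R : Type*} [CommRing R] {S : Submonoid R}
    {a b c : R} (s : S) (h : a * b = c * s) :
    algebraMap R (LocalizedModule S R) a * LocalizedModule.mk b s = algebraMap R _ c := by
  rw [Algebra.algebraMap_eq_smul_one, Algebra.algebraMap_eq_smul_one, smul_mul_assoc, one_mul,
    LocalizedModule.smul'_mk, OreLocalization.one_def, LocalizedModule.smul'_mk]
  refine LocalizedModule.mk_eq.mpr ⟨1, ?_⟩
  simp only [one_smul, smul_eq_mul, Submonoid.smul_def, h]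
  ring

namespace AlgebraicGeometry.Spec

variable {R : CommRingCat} {V : (Spec R).Opens}

theorem basicOpen_algebraMap_of_le {r : R} (h : PrimeSpectrum.basicOpen r ≤ V) :
    (Spec R).basicOpen (algebraMap R Γ(Spec R, V) r) = PrimeSpectrum.basicOpen r := by
  rw [IsAffineOpen.algebraMap_Spec_obj, CommRingCat.comp_apply, Scheme.basicOpen_res,
    basicOpen_eq_of_affine]
  exact inf_eq_right.mpr h

theorem eq_of_forall_algebraMap_mul_eq (s : Set R) (hs : ∀ x ∈ V, ∃ r ∈ s, r ∉ x.asIdeal)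
    {f g : Γ(Spec R, V)}
    (h : ∀ r ∈ s, algebraMap R Γ(Spec R, V) r * f = algebraMap R Γ(Spec R, V) r * g) : f = g := by
  refine Subtype.ext (funext fun x => ?_)
  obtain ⟨r, hr, hrx⟩ := hs x.1 x.2
  have := (x.1 : PrimeSpectrum R).isPrime
  have hunit : IsUnit (algebraMap R (StructureSheaf.Localizations R x.1) r) :=
    IsLocalization.map_units (M := (x.1 : PrimeSpectrum R).asIdeal.primeCompl) _ ⟨r, hrx⟩
  exact hunit.mul_left_cancel congr($(h r hr).1 x)

theorem exists_section_of_mul_mem_one {K : Type*} [CommRing K] [Algebra R K] [IsFractionRing R K]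
    (s : Set R) (hs : ∀ x ∈ V, ∃ r ∈ s, r ∉ x.asIdeal) (b : K)
    (hb : ∀ r ∈ s, algebraMap R K r * b ∈ (1 : Submodule R K)) :
    ∃ f : Γ(Spec R, V), ∀ r d, algebraMap R K r * b = algebraMap R K d →
      algebraMap R Γ(Spec R, V) r * f = algebraMap R Γ(Spec R, V) d := by
  -- All fractions `d / r` with `r * b = d` represent `b`, so any choice of them glues.
  have cross {r r' d d' : R} (hd : algebraMap R K r * b = algebraMap R K d)
      (hd' : algebraMap R K r' * b = algebraMap R K d') : r * d' = d * r' :=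
    IsFractionRing.injective R K (by simp only [map_mul, ← hd, ← hd']; ring)
  choose r hr hrx using hs
  choose d hd using fun x : V => Submodule.mem_one.mp (hb _ (hr x.1 x.2))
  have hfrac : (StructureSheaf.isLocallyFraction R R).pred
      (fun x : V => LocalizedModule.mk (d x) ⟨r x.1 x.2, hrx x.1 x.2⟩) := by
    intro x
    refine ⟨V ⊓ PrimeSpectrum.basicOpen (r x.1 x.2), ⟨x.2, hrx x.1 x.2⟩, homOfLE inf_le_left,
      d x, r x.1 x.2, fun y => ⟨y.2.2, LocalizedModule.mk_eq.mpr ⟨1, ?_⟩⟩⟩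
    simp only [one_smul, Submonoid.smul_def, smul_eq_mul]
    exact (cross (hd x).symm (hd ⟨y.1, y.2.1⟩).symm).trans (mul_comm _ _)
  refine ⟨⟨_, hfrac⟩, fun r' d' hd' => Subtype.ext (funext fun x => ?_)⟩
  exact LocalizedModule.algebraMap_mul_mk_eq_algebraMap _ (cross hd' (hd x).symm)

theorem span_algebraMap_image_eq_top_of_isUnit {I : Ideal R}
    (hI : IsUnit (I : FractionalIdeal (nonZeroDivisors R) (FractionRing R)))
    (hV : ∀ x ∈ V, ∃ r ∈ I, r ∉ x.asIdeal) :
    Ideal.span (algebraMap R Γ(Spec R, V) '' I) = ⊤ := by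
  obtain ⟨n, r, b, hr, hb, hsum⟩ := FractionalIdeal.exists_sum_mul_eq_one_of_isUnit hI
  choose f hf using fun i => exists_section_of_mul_mem_one (I : Set R) hV (b i) (hb i)
  have hone : ∑ i, algebraMap R Γ(Spec R, V) (r i) * f i = 1 := by
    refine eq_of_forall_algebraMap_mul_eq (I : Set R) hV fun x hx => ?_
    choose d hd using fun i => Submodule.mem_one.mp (hb i x hx)
    have hx : ∑ i, r i * d i = x := IsFractionRing.injective R (FractionRing R) <| by
      simp only [map_sum, map_mul, hd, mul_left_comm _ (algebraMap R _ x), ← Finset.mul_sum, hsum,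
        mul_one]
    calc algebraMap R Γ(Spec R, V) x * ∑ i, algebraMap R Γ(Spec R, V) (r i) * f i
        = ∑ i, algebraMap R Γ(Spec R, V) (r i) * (algebraMap R Γ(Spec R, V) x * f i) := by
          simp only [Finset.mul_sum, mul_left_comm]
      _ = algebraMap R Γ(Spec R, V) x * 1 := by
          simp only [hf _ x _ (hd _).symm, ← map_mul, ← map_sum, hx, mul_one]
  rw [Ideal.eq_top_iff_one, ← hone]
  exact Ideal.sum_mem _ fun i _ => Ideal.mul_mem_right _ _ (Ideal.subset_span ⟨r i, hr i, rfl⟩)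

end AlgebraicGeometry.Spec

/-- If `R` is a commutative integral domain and `I` is a nonzero invertible
ideal of `R` (a unit as a fractional ideal of `R` in its fraction field), then the open
subset of `Spec R` complementary to the zero locus of `I` is an affine open subset. -/
theorem isAffineOpen_compl_zeroLocus_of_invertible
    (R : Type) [CommRing R] (I : Ideal R)
    (hinv : IsUnit (I : FractionalIdeal (nonZeroDivisors R) (FractionRing R))) :
    IsAffineOpen (X := Spec (CommRingCat.of R))
      ⟨{p : PrimeSpectrum R | ¬ I ≤ p.asIdeal}, by
        have h : {p : PrimeSpectrum R | ¬ I ≤ p.asIdeal}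
            = (PrimeSpectrum.zeroLocus (I : Set R))ᶜ := by
          ext p
          simp [PrimeSpectrum.mem_zeroLocus, SetLike.coe_subset_coe]
        have h2 : IsOpen {p : PrimeSpectrum R | ¬ I ≤ p.asIdeal} := by
          rw [h]
          exact (PrimeSpectrum.isClosed_zeroLocus _).isOpen_compl
        exact h2⟩ := by
  refine isAffineOpen_of_isAffineOpen_basicOpen _ _
    (Spec.span_algebraMap_image_eq_top_of_isUnit (R := .of R) hinv
      fun x hx => Set.not_subset.mp hx) ?_
  rintro _ ⟨r, hr, rfl⟩
  rw [Spec.basicOpen_algebraMap_of_le (by intro x hx hI; exact hx (hI hr))]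
  exact IsAffineOpen.Spec_basicOpen r
end
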